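/- Let α be badly approximable and let 0 < a < 1. Then there exists C(α,a) > 0 such that for every integer q ≥ 2, the sum over integers x with q ≤ x ≤ q³ of 1/(‖αx‖ · x · (log(1/‖αx‖))^a · (log x)^{2−a}) is at most C(α,a). -/

import Mathlib

/-!
Sort the `x` by the dyadic level `k` of `1 / ‖αx‖`, so that `2⁻¹ 2⁻ᵏ < ‖αx‖ ≤ 2⁻ᵏ`.
Since `x ‖αx‖ ≥ δ`, a point of level `k` satisfies `x ≥ δ 2ᵏ`, and two points `x < y` of level `k`
satisfy `δ ≤ (y - x) ‖α(y - x)‖ ≤ (y - x) 2¹⁻ᵏ`, so they are `δ 2ᵏ⁻¹`-separated. A separated set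
in `[δ 2ᵏ⁻¹, q³]` has `∑ 1/x ≲ 2⁻ᵏ log (q³/δ) / δ`, so level `k` contributes
`≲ log q / (k^a (log q)^(2-a))`. Only levels `k ≲ log q` occur, and
`∑_{k ≲ log q} k^(-a) ≲ (log q)^(1-a)` cancels the remaining `(log q)^(a-1)`.
-/

noncomputable def nint (y : ℝ) : ℝ := |y - round y|

open Finset Real

lemma nint_le_half (y : ℝ) : nint y ≤ 1 / 2 := abs_sub_round y

lemma two_le_one_div_nint {y : ℝ} (hy : 0 < nint y) : 2 ≤ 1 / nint y := by
  rw [le_div_iff₀ hy]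
  linarith [nint_le_half y]

lemma nint_sub_le (y z : ℝ) : nint (y - z) ≤ nint y + nint z :=
  calc nint (y - z) ≤ |y - z - ((round y - round z : ℤ) : ℝ)| := round_le _ _
    _ = |(y - round y) - (z - round z)| := by push_cast; ring_nf
    _ ≤ nint y + nint z := abs_sub _ _

noncomputable def dyadicLevel (y : ℝ) : ℕ := Nat.log 2 ⌊y⌋₊

lemma dyadicLevel_mono : Monotone dyadicLevel :=
  fun _ _ h => Nat.log_mono_right (Nat.floor_mono h)

lemma two_pow_dyadicLevel_le {y : ℝ} (hy : 1 ≤ y) : (2 : ℝ) ^ dyadicLevel y ≤ y := by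
  have hfloor : ⌊y⌋₊ ≠ 0 := (Nat.floor_pos.mpr hy).ne'
  calc (2 : ℝ) ^ dyadicLevel y ≤ ⌊y⌋₊ := by exact_mod_cast Nat.pow_log_le_self 2 hfloor
    _ ≤ y := Nat.floor_le (by linarith)

lemma lt_two_pow_dyadicLevel_succ (y : ℝ) : y < 2 ^ (dyadicLevel y + 1) :=
  calc y < ⌊y⌋₊ + 1 := Nat.lt_floor_add_one y
    _ ≤ 2 ^ (dyadicLevel y + 1) := by exact_mod_cast Nat.lt_pow_succ_log_self one_lt_two _

lemma one_le_dyadicLevel {y : ℝ} (hy : 2 ≤ y) : 1 ≤ dyadicLevel y :=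
  Nat.log_pos one_lt_two (Nat.le_floor (by exact_mod_cast hy))

lemma dyadicLevel_mul_log_two_le {y : ℝ} (hy : 1 ≤ y) : dyadicLevel y * log 2 ≤ log y := by
  rw [← log_pow]
  exact log_le_log (by positivity) (two_pow_dyadicLevel_le hy)

lemma two_pow_dyadicLevel_one_div_mul_le {r : ℝ} (hr : 0 < r) (hr1 : r ≤ 1) :
    2 ^ dyadicLevel (1 / r) * r ≤ 1 :=
  (le_div_iff₀ hr).mp (two_pow_dyadicLevel_le ((one_le_div hr).mpr hr1))

lemma one_div_le_two_pow_dyadicLevel_div {r x L a : ℝ} (ha0 : 0 ≤ a) (ha2 : a ≤ 2) (hr : 0 < r)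
    (hr2 : r ≤ 1 / 2) (hx : 0 < x) (hL : 0 < L) (hLx : L ≤ log x) :
    1 / (r * x * log (1 / r) ^ a * log x ^ (2 - a)) ≤
      2 ^ (dyadicLevel (1 / r) + 1) / (x * (dyadicLevel (1 / r) * log 2) ^ a * L ^ (2 - a)) := by
  set k := dyadicLevel (1 / r)
  have h2 : 2 ≤ 1 / r := by rw [le_div_iff₀ hr]; linarith
  have hk : (0 : ℝ) < k * log 2 :=
    mul_pos (by exact_mod_cast one_le_dyadicLevel h2) (log_pos one_lt_two)
  have hklog : k * log 2 ≤ log (1 / r) := dyadicLevel_mul_log_two_le (by linarith)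
  calc 1 / (r * x * log (1 / r) ^ a * log x ^ (2 - a))
      = (1 / r) / (x * log (1 / r) ^ a * log x ^ (2 - a)) := by ring
    _ ≤ 2 ^ (k + 1) / (x * (k * log 2) ^ a * L ^ (2 - a)) := by
      have : 0 < x * (k * log 2) ^ a * L ^ (2 - a) := by positivity
      gcongr
      · exact (lt_two_pow_dyadicLevel_succ _).le
      · have : 0 < log (1 / r) := hk.trans_le hklog
        positivity

lemma sum_inv_le_of_separated {S : Finset ℝ} {s N : ℝ} (hs : 0 < s) (hsN : s ≤ N)
    (hS : ∀ x ∈ S, s ≤ x ∧ x ≤ N) (hsep : ∀ x ∈ S, ∀ y ∈ S, x < y → s ≤ y - x) :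
    ∑ x ∈ S, x⁻¹ ≤ (1 + log (N / s)) / s := by
  set j : ℝ → ℕ := fun x => ⌊x / s⌋₊
  have hj_lt : ∀ x ∈ S, ∀ y ∈ S, x < y → j x < j y := by
    intro x hx y hy hxy
    have hxs : 0 ≤ x / s := div_nonneg (hs.le.trans (hS x hx).1) hs.le
    have hstep : x / s + 1 ≤ y / s := by
      rw [div_add_one hs.ne', div_le_div_iff_of_pos_right hs]
      linarith [hsep x hx y hy hxy]
    calc j x < ⌊x / s⌋₊ + 1 := Nat.lt_succ_self _
      _ = ⌊x / s + 1⌋₊ := (Nat.floor_add_one hxs).symm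
      _ ≤ j y := Nat.floor_mono hstep
  have hinj : Set.InjOn j S := by
    intro x hx y hy hxy
    by_contra hne
    rcases lt_or_gt_of_ne hne with h | h
    · exact (hj_lt x hx y hy h).ne hxy
    · exact (hj_lt y hy x hx h).ne' hxy
  have hj_mem : ∀ x ∈ S, j x ∈ Icc 1 ⌊N / s⌋₊ := by
    intro x hx
    have h1 : 1 ≤ x / s := (one_le_div hs).mpr (hS x hx).1
    exact mem_Icc.mpr ⟨(Nat.one_le_floor_iff _).mpr h1,
      Nat.floor_mono (div_le_div_of_nonneg_right (hS x hx).2 hs.le)⟩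
  have hterm : ∀ x ∈ S, x⁻¹ ≤ s⁻¹ * ((j x : ℕ) : ℝ)⁻¹ := by
    intro x hx
    have hj0 : (0 : ℝ) < j x := by exact_mod_cast (mem_Icc.mp (hj_mem x hx)).1
    have hjx : (j x : ℝ) * s ≤ x :=
      (le_div_iff₀ hs).mp (Nat.floor_le (div_nonneg (hs.le.trans (hS x hx).1) hs.le))
    rw [← mul_inv]
    exact inv_anti₀ (by positivity) (by linarith)
  have hN : 1 ≤ N / s := (one_le_div hs).mpr hsN
  calc ∑ x ∈ S, x⁻¹ ≤ ∑ x ∈ S, s⁻¹ * ((j x : ℕ) : ℝ)⁻¹ := sum_le_sum hterm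
    _ = s⁻¹ * ∑ n ∈ S.image j, (n : ℝ)⁻¹ := by rw [sum_image hinj, mul_sum]
    _ ≤ s⁻¹ * ∑ n ∈ Icc 1 ⌊N / s⌋₊, (n : ℝ)⁻¹ := by
      gcongr
      exact image_subset_iff.mpr hj_mem
    _ = s⁻¹ * harmonic ⌊N / s⌋₊ := by
      simp only [harmonic_eq_sum_Icc, Rat.cast_sum, Rat.cast_inv, Rat.cast_natCast]
    _ ≤ s⁻¹ * (1 + log (N / s)) := by
      gcongr
      refine (harmonic_le_one_add_log _).trans ?_
      gcongr
      · exact_mod_cast (Nat.one_le_floor_iff _).mpr hN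
      · exact Nat.floor_le (by linarith)
    _ = (1 + log (N / s)) / s := by ring

lemma sum_Icc_rpow_neg_le {a : ℝ} (ha0 : 0 ≤ a) (ha1 : a < 1) (K : ℕ) :
    ∑ k ∈ Icc 1 K, (k : ℝ) ^ (-a) ≤ (K : ℝ) ^ (1 - a) / (1 - a) := by
  induction K with
  | zero => simp [zero_rpow (by linarith : (1 : ℝ) - a ≠ 0)]
  | succ K ih =>
    rw [sum_Icc_succ_top (by omega)]
    set x : ℝ := ((K + 1 : ℕ) : ℝ)
    have hx : 1 ≤ x := by simp [x]
    -- Bernoulli: `K ^ (1 - a) = x ^ (1 - a) (1 - 1/x) ^ (1 - a) ≤ x ^ (1 - a) - (1 - a) x ^ (-a)`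
    have hbern : (1 + -x⁻¹) ^ (1 - a) ≤ 1 + (1 - a) * -x⁻¹ :=
      rpow_one_add_le_one_add_mul_self (by linarith [inv_le_one_of_one_le₀ hx]) (by linarith)
        (by linarith)
    have hK : (K : ℝ) = x * (1 + -x⁻¹) := by
      simp only [x]; push_cast; field_simp; ring
    have hstep : (K : ℝ) ^ (1 - a) ≤ x ^ (1 - a) - (1 - a) * x ^ (-a) := by
      rw [hK, mul_rpow (by linarith) (by linarith [inv_le_one_of_one_le₀ hx])]
      have : x ^ (-a) = x ^ (1 - a) * x⁻¹ := by
        rw [show -a = (1 - a) - 1 by ring, rpow_sub_one (by positivity), div_eq_mul_inv]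
      rw [this]
      nlinarith [rpow_pos_of_pos (by positivity : (0:ℝ) < x) (1 - a)]
    rw [le_div_iff₀ (by linarith)] at ih ⊢
    rw [add_mul]
    linarith

lemma sum_Icc_div_rpow_le {a B M L : ℝ} (ha0 : 0 ≤ a) (ha1 : a < 1) (hL : 0 < L) {K : ℕ}
    (hM : M ≤ B * L) (hK : K ≤ B * L) :
    ∑ k ∈ Icc 1 K, M / ((k : ℝ) ^ a * L ^ (2 - a)) ≤ B ^ (2 - a) / (1 - a) := by
  have hB : 0 ≤ B := nonneg_of_mul_nonneg_left ((Nat.cast_nonneg K).trans hK) hL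
  have hLa : 0 < L ^ (1 - a) := rpow_pos_of_pos hL _
  have hterm : ∀ k : ℕ, B * L / ((k : ℝ) ^ a * L ^ (2 - a)) =
      B * (L ^ (1 - a))⁻¹ * (k : ℝ) ^ (-a) := by
    intro k
    rw [show 2 - a = 1 + (1 - a) by ring, rpow_add hL, rpow_one, rpow_neg (Nat.cast_nonneg k)]
    field_simp
  calc ∑ k ∈ Icc 1 K, M / ((k : ℝ) ^ a * L ^ (2 - a))
      ≤ ∑ k ∈ Icc 1 K, B * L / ((k : ℝ) ^ a * L ^ (2 - a)) := by gcongr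
    _ = B * (L ^ (1 - a))⁻¹ * ∑ k ∈ Icc 1 K, (k : ℝ) ^ (-a) := by simp only [hterm, mul_sum]
    _ ≤ B * (L ^ (1 - a))⁻¹ * ((B * L) ^ (1 - a) / (1 - a)) := by
      gcongr
      refine (sum_Icc_rpow_neg_le ha0 ha1 K).trans ?_
      gcongr
    _ = B ^ (2 - a) / (1 - a) := by
      rw [mul_rpow hB hL.le, show 2 - a = 1 + (1 - a) by ring, rpow_add' hB (by linarith),
        rpow_one]
      field_simp

lemma one_add_log_pow_three_div_le {δ q : ℝ} (hδ : 0 < δ) (hδ1 : δ ≤ 1) (hq : 2 ≤ q) :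
    1 + log (q ^ 3 / δ) ≤ (3 + (1 - log δ) / log 2) * log q := by
  have hlog2 : 0 < log 2 := log_pos one_lt_two
  have hq2 : log 2 ≤ log q := log_le_log two_pos hq
  have hlogδ : log δ ≤ 0 := log_nonpos hδ.le hδ1
  have : 1 - log δ ≤ (1 - log δ) / log 2 * log q := by
    rw [div_mul_eq_mul_div, le_div_iff₀ hlog2]
    nlinarith
  rw [log_div (by positivity) hδ.ne', log_pow]
  push_cast
  nlinarith

def BadlyApproximableWith (α δ : ℝ) : Prop :=
  ∀ q : ℕ, 1 ≤ q → δ ≤ q * nint (q * α)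

namespace BadlyApproximableWith

variable {α δ : ℝ}

lemma le_mul_nint (hα : BadlyApproximableWith α δ) {x : ℕ} (hx : 1 ≤ x) :
    δ ≤ x * nint (α * x) := by
  simpa only [mul_comm α] using hα x hx

lemma le_half (hα : BadlyApproximableWith α δ) : δ ≤ 1 / 2 := by
  simpa using (hα 1 le_rfl).trans (by simpa using nint_le_half α)

lemma nint_pos (hδ : 0 < δ) (hα : BadlyApproximableWith α δ) {x : ℕ} (hx : 1 ≤ x) :
    0 < nint (α * x) :=
  pos_of_mul_pos_right (hδ.trans_le (hα.le_mul_nint hx)) (Nat.cast_nonneg x)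

lemma le_sub_mul_nint_add (hα : BadlyApproximableWith α δ) {x y : ℕ} (hxy : x < y) :
    δ ≤ (y - x) * (nint (α * y) + nint (α * x)) := by
  have h := hα (y - x) (by omega)
  rw [Nat.cast_sub hxy.le] at h
  calc δ ≤ (y - x) * nint (α * y - α * x) := by rwa [← mul_sub_left_distrib, mul_comm α]
    _ ≤ (y - x) * (nint (α * y) + nint (α * x)) :=
      mul_le_mul_of_nonneg_left (nint_sub_le _ _) (sub_nonneg.mpr (by exact_mod_cast hxy.le))

lemma one_le_pow_three_div (hδ : 0 < δ) (hα : BadlyApproximableWith α δ) {q : ℕ}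
    (hq : 1 ≤ q) : 1 ≤ (q : ℝ) ^ 3 / δ :=
  (one_le_div hδ).mpr <| hα.le_half.trans <| by
    linarith [one_le_pow₀ (n := 3) (by exact_mod_cast hq : (1 : ℝ) ≤ q)]

lemma mul_two_pow_dyadicLevel_le (hδ : 0 < δ) (hα : BadlyApproximableWith α δ) {x : ℕ}
    (hx : 1 ≤ x) : δ * 2 ^ dyadicLevel (1 / nint (α * x)) ≤ x := by
  have hr := two_pow_dyadicLevel_one_div_mul_le (hα.nint_pos hδ hx)
    ((nint_le_half _).trans (by norm_num))
  calc δ * 2 ^ dyadicLevel (1 / nint (α * x))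
      ≤ x * nint (α * x) * 2 ^ dyadicLevel (1 / nint (α * x)) := by
        gcongr
        exact hα.le_mul_nint hx
    _ ≤ x := by nlinarith [(Nat.cast_nonneg x : (0 : ℝ) ≤ x)]

lemma mul_two_pow_le_sub (hδ : 0 < δ) (hα : BadlyApproximableWith α δ) {x y k : ℕ}
    (hx : 1 ≤ x) (hxy : x < y) (hkx : dyadicLevel (1 / nint (α * x)) = k)
    (hky : dyadicLevel (1 / nint (α * y)) = k) : δ * 2 ^ k / 2 ≤ y - x := by
  have hlevel : ∀ z : ℕ, 1 ≤ z → dyadicLevel (1 / nint (α * z)) = k →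
      2 ^ k * nint (α * z) ≤ 1 := fun z hz hkz =>
    hkz ▸ two_pow_dyadicLevel_one_div_mul_le (hα.nint_pos hδ hz)
      ((nint_le_half _).trans (by norm_num))
  have hrx := hlevel x hx hkx
  have hry := hlevel y (by omega) hky
  have hyx : (0 : ℝ) ≤ y - x := sub_nonneg.mpr (by exact_mod_cast hxy.le)
  nlinarith [hα.le_sub_mul_nint_add hxy, pow_pos (two_pos : (0 : ℝ) < 2) k]

lemma sum_inv_fiber_le (hδ : 0 < δ) (hα : BadlyApproximableWith α δ) {q : ℕ} (hq : 1 ≤ q)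
    (k : ℕ) :
    ∑ x ∈ Icc q (q ^ 3) with dyadicLevel (1 / nint (α * (x : ℕ))) = k, (x : ℝ)⁻¹
      ≤ 2 * (1 + log (q ^ 3 / δ)) / (δ * 2 ^ k) := by
  set F : Finset ℕ := {x ∈ Icc q (q ^ 3) | dyadicLevel (1 / nint (α * x)) = k}
  have hmem : ∀ x ∈ F, q ≤ x ∧ x ≤ q ^ 3 ∧ dyadicLevel (1 / nint (α * x)) = k := by
    intro x hx; simpa [F, and_assoc] using hx
  rcases F.eq_empty_or_nonempty with hF | ⟨x₀, hx₀⟩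
  · rw [hF, sum_empty]
    have : 0 ≤ log (q ^ 3 / δ) := log_nonneg (hα.one_le_pow_three_div hδ hq)
    positivity
  set s := δ * 2 ^ k / 2
  have hδs : δ ≤ s := by
    obtain ⟨hqx, -, hkx⟩ := hmem x₀ hx₀
    have hk : 1 ≤ k :=
      hkx ▸ one_le_dyadicLevel (two_le_one_div_nint (hα.nint_pos hδ (by omega)))
    have : (2 : ℝ) ≤ 2 ^ k := by exact_mod_cast Nat.le_self_pow (by omega) 2
    simp only [s]; nlinarith
  have hsx : ∀ x ∈ F, s ≤ x ∧ (x : ℝ) ≤ q ^ 3 := by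
    intro x hx
    obtain ⟨hqx, hxq, hkx⟩ := hmem x hx
    have := hα.mul_two_pow_dyadicLevel_le hδ (x := x) (by omega)
    rw [hkx] at this
    exact ⟨by simp only [s]; nlinarith, by exact_mod_cast hxq⟩
  calc ∑ x ∈ F, (x : ℝ)⁻¹ ≤ (1 + log (q ^ 3 / s)) / s := by
        rw [← sum_image Nat.cast_injective.injOn]
        refine sum_inv_le_of_separated (hδ.trans_le hδs)
          ((hsx x₀ hx₀).1.trans (hsx x₀ hx₀).2) (by simpa using hsx) ?_
        simp only [mem_image]
        rintro _ ⟨x, hx, rfl⟩ _ ⟨y, hy, rfl⟩ hxy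
        exact hα.mul_two_pow_le_sub hδ (by linarith [(hmem x hx).1]) (by exact_mod_cast hxy)
          (hmem x hx).2.2 (hmem y hy).2.2
    _ ≤ (1 + log (q ^ 3 / δ)) / s := by
        have hs : 0 < s := hδ.trans_le hδs
        gcongr
    _ = 2 * (1 + log (q ^ 3 / δ)) / (δ * 2 ^ k) := by simp only [s]; field_simp

lemma sum_fiber_le (hδ : 0 < δ) (hα : BadlyApproximableWith α δ) {a : ℝ} (ha0 : 0 ≤ a)
    (ha2 : a ≤ 2) {q : ℕ} (hq : 2 ≤ q) (k : ℕ) :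
    ∑ x ∈ Icc q (q ^ 3) with dyadicLevel (1 / nint (α * (x : ℕ))) = k,
        1 / (nint (α * x) * x * log (1 / nint (α * x)) ^ a * log x ^ (2 - a))
      ≤ 4 / (δ * log 2 ^ a) * ((1 + log (q ^ 3 / δ)) / (k ^ a * log q ^ (2 - a))) := by
  have hq2 : (2 : ℝ) ≤ q := by exact_mod_cast hq
  set c := 2 ^ (k + 1) / ((k * log 2) ^ a * log q ^ (2 - a))
  have hterm : ∀ x ∈ Icc q (q ^ 3), dyadicLevel (1 / nint (α * x)) = k →
      1 / (nint (α * x) * x * log (1 / nint (α * x)) ^ a * log x ^ (2 - a)) ≤ c * (x : ℝ)⁻¹ := by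
    intro x hx hkx
    have hqx : (q : ℝ) ≤ x := by exact_mod_cast (mem_Icc.mp hx).1
    have h := one_div_le_two_pow_dyadicLevel_div ha0 ha2
      (hα.nint_pos hδ (x := x) (by linarith [(mem_Icc.mp hx).1])) (nint_le_half _)
      (by linarith) (log_pos (by linarith)) (log_le_log (by linarith) hqx)
    rw [hkx] at h
    exact h.trans_eq (by ring)
  calc _ ≤ ∑ x ∈ Icc q (q ^ 3) with dyadicLevel (1 / nint (α * (x : ℕ))) = k, c * (x : ℝ)⁻¹ :=
        sum_le_sum fun x hx => hterm x (mem_filter.mp hx).1 (mem_filter.mp hx).2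
    _ ≤ c * (2 * (1 + log (q ^ 3 / δ)) / (δ * 2 ^ k)) := by
        rw [← mul_sum]
        gcongr
        exact hα.sum_inv_fiber_le hδ (by omega) k
    _ = 4 / (δ * log 2 ^ a) * ((1 + log (q ^ 3 / δ)) / (k ^ a * log q ^ (2 - a))) := by
        simp only [c]
        rw [mul_rpow (Nat.cast_nonneg k) (log_pos one_lt_two).le]
        field_simp
        ring

lemma dyadicLevel_mem_Icc (hδ : 0 < δ) (hα : BadlyApproximableWith α δ) {q x : ℕ}
    (hq : 1 ≤ q) (hx : x ∈ Icc q (q ^ 3)) :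
    dyadicLevel (1 / nint (α * x)) ∈ Icc 1 (dyadicLevel (q ^ 3 / δ)) := by
  obtain ⟨hqx, hxq⟩ := mem_Icc.mp hx
  have hr := hα.nint_pos hδ (x := x) (by omega)
  refine mem_Icc.mpr ⟨one_le_dyadicLevel (two_le_one_div_nint hr), dyadicLevel_mono ?_⟩
  rw [div_le_div_iff₀ hr hδ, one_mul]
  calc δ ≤ x * nint (α * x) := hα.le_mul_nint (by omega)
    _ ≤ q ^ 3 * nint (α * x) := by gcongr; exact_mod_cast hxq

end BadlyApproximableWith

theorem stmt_2 (α : ℝ) (hα : ∃ δ > 0, ∀ q : ℕ, 1 ≤ q → δ ≤ (q : ℝ) * nint (q * α))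
    (a : ℝ) (ha : 0 < a) (ha1 : a < 1) :
    ∃ C > 0, ∀ q : ℕ, 2 ≤ q →
      ∑ x ∈ Finset.Icc q (q ^ 3),
        1 / (nint (α * x) * x * (Real.log (1 / nint (α * x))) ^ a
              * (Real.log x) ^ (2 - a)) ≤ C := by
  obtain ⟨δ, hδ, hα⟩ := hα
  replace hα : BadlyApproximableWith α δ := hα
  have hδ1 : δ ≤ 1 := hα.le_half.trans (by norm_num)
  have hlog2 : 0 < log 2 := log_pos one_lt_two
  set A := 3 + (1 - log δ) / log 2
  have hA : 0 < A := add_pos_of_pos_of_nonneg three_pos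
    (div_nonneg (by linarith [log_nonpos hδ.le hδ1]) hlog2.le)
  refine ⟨4 / (δ * log 2 ^ a) * ((A / log 2) ^ (2 - a) / (1 - a)), ?_, fun q hq => ?_⟩
  · have : 0 < 1 - a := by linarith
    have : 0 < A / log 2 := by positivity
    positivity
  have hq2 : (2 : ℝ) ≤ q := by exact_mod_cast hq
  have hM := one_add_log_pow_three_div_le hδ hδ1 hq2
  have hK : (dyadicLevel (q ^ 3 / δ) : ℝ) ≤ A / log 2 * log q := by
    have := dyadicLevel_mul_log_two_le (hα.one_le_pow_three_div hδ (q := q) (by omega))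
    rw [div_mul_eq_mul_div, le_div_iff₀ hlog2]
    linarith
  calc _ = ∑ k ∈ Icc 1 (dyadicLevel (q ^ 3 / δ)),
        ∑ x ∈ Icc q (q ^ 3) with dyadicLevel (1 / nint (α * (x : ℕ))) = k,
          1 / (nint (α * x) * x * log (1 / nint (α * x)) ^ a * log x ^ (2 - a)) :=
        (sum_fiberwise_of_maps_to (fun x => hα.dyadicLevel_mem_Icc hδ (by omega)) _).symm
    _ ≤ ∑ k ∈ Icc 1 (dyadicLevel (q ^ 3 / δ)), 4 / (δ * log 2 ^ a) *
          ((1 + log (q ^ 3 / δ)) / ((k : ℝ) ^ a * log q ^ (2 - a))) :=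
        sum_le_sum fun k _ => hα.sum_fiber_le hδ ha.le (by linarith) hq k
    _ = 4 / (δ * log 2 ^ a) * ∑ k ∈ Icc 1 (dyadicLevel (q ^ 3 / δ)),
          (1 + log (q ^ 3 / δ)) / ((k : ℝ) ^ a * log q ^ (2 - a)) := (mul_sum _ _ _).symm
    _ ≤ 4 / (δ * log 2 ^ a) * ((A / log 2) ^ (2 - a) / (1 - a)) := by
        gcongr
        refine sum_Icc_div_rpow_le ha.le ha1 (log_pos (by linarith)) ?_ hK
        exact hM.trans (by gcongr; exact le_div_self hA.le hlog2 (by linarith [log_two_lt_d9]))
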